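/- Let μ = (b₁ ≥ ⋯ ≥ b_m ≥ 0) be weakly decreasing nonnegative integers with i(μ) nonzero entries, and let k ≥ 0. There exists a chain μ = ν⁰, ν¹, …, ν^k with each ν^{j+1} an interleaving of ν^j and ν^k = 0 (the zero weight) if and only if k ≥ i(μ). -/

import Mathlib

/-- The number of nonzero entries `i(μ)` of a weight `μ = (b₁,…,b_m)`. -/
def numNonzero {m : ℕ} (μ : Fin m → ℕ) : ℕ :=
  (Finset.univ.filter fun j => μ j ≠ 0).card

/-- `ν` is a Gelfand–Tsetlin interleaving of `μ` (with zero-padding to a common length):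
`ν` is weakly decreasing, nonnegative, and `λ₁ ≥ ν₁ ≥ λ₂ ≥ ν₂ ≥ ⋯`. -/
def Interleaves {m : ℕ} (μ ν : Fin m → ℕ) : Prop :=
  (∀ i j : Fin m, i ≤ j → ν j ≤ ν i) ∧
  (∀ i : Fin m, ν i ≤ μ i) ∧
  (∀ (i : ℕ) (h : i + 1 < m), μ ⟨i + 1, h⟩ ≤ ν ⟨i, by omega⟩)

/-- `ReachesZero μ k` holds iff there is a chain `μ = ν⁰, ν¹, …, ν^k` with each `ν^{j+1}`
an interleaving of `ν^j` and `ν^k = 0`. -/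
def ReachesZero {m : ℕ} (μ : Fin m → ℕ) : ℕ → Prop
  | 0 => μ = 0
  | k + 1 => ∃ ν : Fin m → ℕ, Interleaves μ ν ∧ ReachesZero ν k

/-!
If `ν` interleaves `μ`, then `μ_{j+1} ≤ ν_j`, so `i(μ) ≤ i(ν) + 1`: each step removes at most one
nonzero entry, and `k ≥ i(μ)` steps are needed. Conversely, dropping the first entry of `μ` and
padding with `0` is an interleaving that lowers `i(μ)` by one, so `i(μ)` steps suffice.
-/

section numNonzero

variable {m : ℕ}

lemma numNonzero_eq_zero_iff {f : Fin m → ℕ} : numNonzero f = 0 ↔ f = 0 := by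
  simp [numNonzero, Finset.filter_eq_empty_iff, funext_iff]

lemma val_lt_numNonzero {f : Fin m → ℕ} (hf : Antitone f) {j : Fin m} (hj : f j ≠ 0) :
    (j : ℕ) < numNonzero f := by
  have hsub : Finset.Iic j ⊆ Finset.univ.filter fun i => f i ≠ 0 := fun i hi =>
    Finset.mem_filter.mpr ⟨Finset.mem_univ i,
      fun h0 => hj (Nat.eq_zero_of_le_zero (h0 ▸ hf (Finset.mem_Iic.mp hi)))⟩
  have hcard := Finset.card_le_card hsub
  rwa [Fin.card_Iic] at hcard

lemma numNonzero_le_of_forall {f : Fin m → ℕ} {t : ℕ} (h : ∀ j, f j ≠ 0 → (j : ℕ) < t) :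
    numNonzero f ≤ t := by
  calc numNonzero f ≤ (Finset.range t).card :=
        Finset.card_le_card_of_injOn Fin.val
          (fun j hj => Finset.mem_range.mpr (h j (Finset.mem_filter.mp hj).2))
          Fin.val_injective.injOn
    _ = t := Finset.card_range t

end numNonzero

lemma Interleaves.numNonzero_le_succ {m : ℕ} {μ ν : Fin m → ℕ} (h : Interleaves μ ν) :
    numNonzero μ ≤ numNonzero ν + 1 := by
  obtain ⟨hν, -, hμν⟩ := h
  refine numNonzero_le_of_forall fun ⟨j, hj⟩ hμj => ?_
  obtain _ | i := j
  · exact Nat.succ_pos _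
  · have hνi : ν ⟨i, by omega⟩ ≠ 0 := fun h0 => hμj (by simpa [h0] using hμν i hj)
    simpa using val_lt_numNonzero (fun _ _ => hν _ _) hνi

def dropHead {m : ℕ} (μ : Fin m → ℕ) (i : Fin m) : ℕ :=
  if h : (i : ℕ) + 1 < m then μ ⟨i + 1, h⟩ else 0

section dropHead

variable {m : ℕ} {μ : Fin m → ℕ}

lemma dropHead_of_lt {i : ℕ} (h : i + 1 < m) : dropHead μ ⟨i, by omega⟩ = μ ⟨i + 1, h⟩ :=
  dif_pos h

lemma interleaves_dropHead (hμ : Antitone μ) : Interleaves μ (dropHead μ) := by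
  refine ⟨fun i j hij => ?_, fun i => ?_, fun i h => (dropHead_of_lt h).ge⟩
  · unfold dropHead
    split_ifs with hj hi hi
    · exact hμ (Fin.mk_le_mk.mpr (Nat.succ_le_succ (Fin.le_def.mp hij)))
    · exact absurd hj (by have := Fin.le_def.mp hij; omega)
    all_goals exact Nat.zero_le _
  · unfold dropHead
    split_ifs
    · exact hμ (Fin.mk_le_mk.mpr (Nat.le_succ _))
    · exact Nat.zero_le _

lemma numNonzero_dropHead_le (hμ : Antitone μ) :
    numNonzero (dropHead μ) ≤ numNonzero μ - 1 := by
  refine numNonzero_le_of_forall fun ⟨j, hj⟩ hne => ?_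
  unfold dropHead at hne
  split_ifs at hne with h
  · have : j + 1 < numNonzero μ := val_lt_numNonzero hμ hne
    show j < numNonzero μ - 1
    omega
  · exact absurd rfl hne

end dropHead

lemma numNonzero_le_of_reachesZero {m : ℕ} {μ : Fin m → ℕ} {k : ℕ} (h : ReachesZero μ k) :
    numNonzero μ ≤ k := by
  induction k generalizing μ with
  | zero => exact (numNonzero_eq_zero_iff.mpr h).le
  | succ k ih =>
    obtain ⟨ν, hμν, hν⟩ := h
    exact hμν.numNonzero_le_succ.trans (Nat.succ_le_succ (ih hν))

lemma reachesZero_of_numNonzero_le {m : ℕ} {μ : Fin m → ℕ} (hμ : Antitone μ) {k : ℕ}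
    (h : numNonzero μ ≤ k) : ReachesZero μ k := by
  induction k generalizing μ with
  | zero => exact numNonzero_eq_zero_iff.mp (Nat.le_zero.mp h)
  | succ k ih =>
    have hdrop := interleaves_dropHead hμ
    refine ⟨dropHead μ, hdrop, ih (fun _ _ => hdrop.1 _ _) ?_⟩
    exact (numNonzero_dropHead_le hμ).trans (by omega)

/-- For a weakly decreasing `μ = (b₁ ≥ ⋯ ≥ b_m ≥ 0)` with `i(μ)` nonzero entries and
`k ≥ 0`, there is a chain of `k` successive interleavings from `μ` to the zero weight if
and only if `k ≥ i(μ)`. -/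
theorem stmt17 (m : ℕ) (μ : Fin m → ℕ)
    (hμ : ∀ i j : Fin m, i ≤ j → μ j ≤ μ i) (k : ℕ) :
    ReachesZero μ k ↔ numNonzero μ ≤ k :=
  ⟨numNonzero_le_of_reachesZero, reachesZero_of_numNonzero_le fun _ _ => hμ _ _⟩
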